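/- Let d ≥ 1 and let Ω ⊂ ℝ^d be a measurable set with 0 < |Ω| < ∞. Set β = 2(2π)^{−d} √(|Ω| · ∫_Ω |z|² dz). Then β ≥ (2π)^{−d} · ω_d^{−1/d} · |Ω|^{(d+1)/d}, where ω_d = π^{d/2}/Γ(1 + d/2) is the volume of the unit ball in ℝ^d. -/

import Mathlib

/-!
Among all sets of a given finite volume, the ball `B_R` centred at the origin minimises the
second moment `∫ ‖z‖²` (bathtub principle: the integrand is `≤ R²` on `B_R \ Ω` and `≥ R²` on
`Ω \ B_R`, two sets of equal measure). In polar coordinates `∫_{B_R} ‖z‖² = d/(d+2) |Ω| R²`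
with `ω_d R^d = |Ω|`, so `2√(|Ω| ∫_Ω ‖z‖²) ≥ 2√(d/(d+2)) |Ω| R ≥ |Ω| R = ω_d^{-1/d} |Ω|^{(d+1)/d}`.
-/

open MeasureTheory Metric Set Module

theorem bathtub_setIntegral_le {α : Type*} [MeasurableSpace α] {μ : Measure α} {f : α → ℝ}
    {s t : Set α} {c : ℝ} (hs : MeasurableSet s) (ht : MeasurableSet t) (hst : μ s = μ t)
    (hs_fin : μ s ≠ ⊤) (hfs : IntegrableOn f s μ) (hft : IntegrableOn f t μ)
    (hf_le : ∀ x ∈ s \ t, f x ≤ c) (hf_ge : ∀ x ∈ t \ s, c ≤ f x) :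
    ∫ x in s, f x ∂μ ≤ ∫ x in t, f x ∂μ := by
  have ht_fin : μ t ≠ ⊤ := hst ▸ hs_fin
  have hsdiff : μ.real (s \ t) = μ.real (t \ s) := by
    rw [measureReal_def, measureReal_def, measure_sdiff_symm hs.nullMeasurableSet
      ht.nullMeasurableSet hst (measure_ne_top_of_subset inter_subset_left hs_fin)]
  calc ∫ x in s, f x ∂μ = ∫ x in s ∩ t, f x ∂μ + ∫ x in s \ t, f x ∂μ :=
        (integral_inter_add_sdiff ht hfs).symm
    _ ≤ ∫ x in t ∩ s, f x ∂μ + ∫ _ in s \ t, c ∂μ := by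
        rw [inter_comm]
        exact add_le_add_right (setIntegral_mono_on (hfs.mono_set sdiff_subset)
          (integrableOn_const (measure_ne_top_of_subset sdiff_subset hs_fin)) (hs.diff ht) hf_le) _
    _ = ∫ x in t ∩ s, f x ∂μ + ∫ _ in t \ s, c ∂μ := by
        rw [setIntegral_const, setIntegral_const, hsdiff]
    _ ≤ ∫ x in t ∩ s, f x ∂μ + ∫ x in t \ s, f x ∂μ :=
        add_le_add_right (setIntegral_mono_on
          (integrableOn_const (measure_ne_top_of_subset sdiff_subset ht_fin))
          (hft.mono_set sdiff_subset) (ht.diff hs) hf_ge) _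
    _ = ∫ x in t, f x ∂μ := integral_inter_add_sdiff hs hft

theorem setIntegral_closedBall_norm_pow {E : Type*} [NormedAddCommGroup E] [NormedSpace ℝ E]
    [MeasurableSpace E] [BorelSpace E] [FiniteDimensional ℝ E] [Nontrivial E]
    (μ : Measure E) [μ.IsAddHaarMeasure] (p : ℕ) {R : ℝ} (hR : 0 ≤ R) :
    ∫ x in closedBall (0 : E) R, ‖x‖ ^ p ∂μ
      = finrank ℝ E / (finrank ℝ E + p) * μ.real (closedBall 0 R) * R ^ p := by
  have hd : 0 < finrank ℝ E := finrank_pos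
  have hind : ∫ x in closedBall (0 : E) R, ‖x‖ ^ p ∂μ
      = ∫ x, (Iic R).indicator (· ^ p) ‖x‖ ∂μ := by
    rw [← integral_indicator measurableSet_closedBall]
    congr 1 with x
    simp [indicator, mem_closedBall]
  have hradial : ∫ y in Ioi (0 : ℝ), y ^ (finrank ℝ E - 1) • (Iic R).indicator (· ^ p) y
      = R ^ (finrank ℝ E + p) / (finrank ℝ E + p) := by
    have hpow : finrank ℝ E - 1 + p + 1 = finrank ℝ E + p := by omega
    have hfun : (fun y : ℝ ↦ y ^ (finrank ℝ E - 1) • (Iic R).indicator (· ^ p) y)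
        = (Iic R).indicator (fun y ↦ y ^ (finrank ℝ E - 1 + p)) := by
      ext y
      by_cases hy : y ∈ Iic R <;> simp [hy, pow_add]
    rw [hfun, setIntegral_indicator measurableSet_Iic, Ioi_inter_Iic,
      ← intervalIntegral.integral_of_le hR, integral_pow,
      zero_pow (by positivity), sub_zero, ← Nat.cast_add_one, hpow, Nat.cast_add]
  rw [hind, integral_fun_norm_addHaar, hradial, Measure.addHaar_real_closedBall μ 0 hR]
  simp only [nsmul_eq_mul, smul_eq_mul]
  field_simp
  ring

theorem setIntegral_closedBall_norm_pow_le {E : Type*} [NormedAddCommGroup E] [NormedSpace ℝ E]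
    [MeasurableSpace E] [BorelSpace E] [FiniteDimensional ℝ E] (μ : Measure E)
    [μ.IsAddHaarMeasure] (p : ℕ) {R : ℝ} (hR : 0 ≤ R) {Ω : Set E} (hΩ : MeasurableSet Ω)
    (hvol : μ (closedBall 0 R) = μ Ω) (hΩint : IntegrableOn (‖·‖ ^ p) Ω μ) :
    ∫ x in closedBall (0 : E) R, ‖x‖ ^ p ∂μ ≤ ∫ x in Ω, ‖x‖ ^ p ∂μ :=
  bathtub_setIntegral_le (c := R ^ p) measurableSet_closedBall hΩ hvol
    measure_closedBall_lt_top.ne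
    ((continuous_norm.pow p).continuousOn.integrableOn_compact (isCompact_closedBall 0 R))
    hΩint (fun x hx ↦ pow_le_pow_left₀ (norm_nonneg x) (mem_closedBall_zero_iff.1 hx.1) p)
    (fun _ hx ↦ pow_le_pow_left₀ hR (not_le.1 (mt mem_closedBall_zero_iff.2 hx.2)).le p)

theorem EuclideanSpace.volume_real_ball_zero_one (ι : Type*) [Fintype ι] [Nonempty ι] :
    volume.real (ball (0 : EuclideanSpace ℝ ι) 1)
      = Real.pi ^ ((Fintype.card ι : ℝ) / 2) / Real.Gamma (1 + (Fintype.card ι : ℝ) / 2) := by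
  have hπ : √Real.pi ^ Fintype.card ι = Real.pi ^ ((Fintype.card ι : ℝ) / 2) := by
    rw [Real.sqrt_eq_rpow, ← Real.rpow_natCast, ← Real.rpow_mul Real.pi_pos.le]
    ring_nf
  rw [measureReal_def, EuclideanSpace.volume_ball, ENNReal.ofReal_one, one_pow, one_mul,
    ENNReal.toReal_ofReal (by positivity), hπ, add_comm]

theorem mul_le_two_mul_sqrt_of_le {d m R I : ℝ} (hd : 1 ≤ d) (hm : 0 ≤ m) (hR : 0 ≤ R)
    (h : d / (d + 2) * m * R ^ 2 ≤ I) : m * R ≤ 2 * √(m * I) := by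
  have hquarter : 1 / 4 ≤ d / (d + 2) := by
    rw [div_le_div_iff₀ (by norm_num) (by linarith)]
    linarith
  have hmI : 0 ≤ m * I := mul_nonneg hm (le_trans (by positivity) h)
  refine (pow_le_pow_iff_left₀ (by positivity) (by positivity) two_ne_zero).1 ?_
  rw [mul_pow 2, Real.sq_sqrt hmI]
  nlinarith [mul_le_mul_of_nonneg_right hquarter (by positivity : 0 ≤ m * R ^ 2)]

/-- If `Ω ⊂ ℝ^d` is measurable with `0 < |Ω| < ∞`, then
`β = 2(2π)^{−d}√(|Ω|·∫_Ω |z|² dz)` satisfies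
`β ≥ (2π)^{−d}·ω_d^{−1/d}·|Ω|^{(d+1)/d}`, where `ω_d = π^{d/2}/Γ(1+d/2)` is the
volume of the unit ball in `ℝ^d`. -/
theorem beta_lower_bound (d : ℕ) (hd : 1 ≤ d)
    (Ω : Set (EuclideanSpace ℝ (Fin d)))
    (hΩmeas : MeasurableSet Ω) (hΩpos : 0 < volume Ω) (hΩfin : volume Ω < ⊤)
    (hΩI : IntegrableOn (fun z => ‖z‖ ^ 2) Ω volume)
    (β : ℝ)
    (hβ : β = 2 * ((2 * Real.pi) ^ d)⁻¹ * Real.sqrt ((volume Ω).toReal * ∫ z in Ω, ‖z‖ ^ 2)) :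
    ((2 * Real.pi) ^ d)⁻¹ *
        (Real.pi ^ ((d : ℝ) / 2) / Real.Gamma (1 + (d : ℝ) / 2)) ^ (-(1 : ℝ) / (d : ℝ)) *
        (volume Ω).toReal ^ (((d : ℝ) + 1) / (d : ℝ))
      ≤ β := by
  have hd₀ : d ≠ 0 := by omega
  have : Nonempty (Fin d) := ⟨⟨0, hd⟩⟩
  set m := (volume Ω).toReal
  set ω := Real.pi ^ ((d : ℝ) / 2) / Real.Gamma (1 + (d : ℝ) / 2)
  have hm : 0 < m := ENNReal.toReal_pos hΩpos.ne' hΩfin.ne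
  have hω : 0 < ω := div_pos (by positivity) (Real.Gamma_pos_of_pos (by positivity))
  set R := (m / ω) ^ (d : ℝ)⁻¹ with hR_def
  have hR : 0 ≤ R := by positivity
  have hvolR : volume.real (closedBall (0 : EuclideanSpace ℝ (Fin d)) R) = m := by
    rw [Measure.addHaar_real_closedBall _ _ hR, finrank_euclideanSpace_fin,
      EuclideanSpace.volume_real_ball_zero_one, Fintype.card_fin,
      Real.rpow_inv_natCast_pow (by positivity) hd₀, div_mul_cancel₀ _ hω.ne']
  have hvol : volume (closedBall (0 : EuclideanSpace ℝ (Fin d)) R) = volume Ω := by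
    rwa [← ENNReal.toReal_eq_toReal_iff' measure_closedBall_lt_top.ne hΩfin.ne]
  have hI : (d : ℝ) / (d + 2) * m * R ^ 2 ≤ ∫ z in Ω, ‖z‖ ^ 2 := by
    have h := setIntegral_closedBall_norm_pow_le volume 2 hR hΩmeas hvol hΩI
    rwa [setIntegral_closedBall_norm_pow volume 2 hR, finrank_euclideanSpace_fin, hvolR,
      Nat.cast_ofNat] at h
  have hmR : ω ^ (-(1 : ℝ) / d) * m ^ (((d : ℝ) + 1) / d) = m * R := by
    rw [hR_def, Real.div_rpow hm.le hω.le, neg_div, Real.rpow_neg hω.le, add_div,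
      div_self (by positivity), Real.rpow_add hm, Real.rpow_one, one_div]
    ring
  rw [hβ, mul_assoc, hmR, mul_assoc 2, mul_left_comm 2]
  exact mul_le_mul_of_nonneg_left
    (mul_le_two_mul_sqrt_of_le (by exact_mod_cast hd) hm.le hR hI) (by positivity)
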